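/- arXiv:2408.07010 — 4 statements merged into one kernel-verified Lean document; each statement's English description precedes it below -/
import Mathlib

section
/- Let φ : X → ℝ_{≥0} be a function on a finite set X of size N, and let n ≥ 2 be an integer. Then Σ_{x∈X} φ(x)^n ≤ N^{-(n-1)} (Σ_x φ(x))^n + (n(n-1)/2) · (max_x φ(x))^{n-2} · Σ_x (φ(x) − (Σ_y φ(y))/N)^2. -/
/-!
For `0 ≤ a, b ≤ M`, the second-order Taylor bound
`a ^ n ≤ b ^ n + n b ^ (n - 1) (a - b) + n (n - 1) / 2 · M ^ (n - 2) (a - b) ^ 2` holds.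
Apply it with `a = φ x` and `b` the mean of `φ`, and sum over `x`: the linear terms cancel,
and `N · mean ^ n = (∑ φ) ^ n / N ^ (n - 1)`.
-/

open Finset
open scoped BigOperators

lemma pow_le_pow_add_mul_sub_add_sq (n : ℕ) {a b M : ℝ} (ha : 0 ≤ a) (hb : 0 ≤ b) (haM : a ≤ M)
    (hbM : b ≤ M) :
    a ^ (n + 2) ≤ b ^ (n + 2) + (n + 2) * b ^ (n + 1) * (a - b)
      + (n + 2) * (n + 1) / 2 * M ^ n * (a - b) ^ 2 := by
  induction n with
  | zero => norm_num; nlinarith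
  | succ n ih =>
    -- The remainder `r k = a ^ k - b ^ k - k b ^ (k - 1) (a - b)` satisfies
    -- `r (k + 1) = a r k + k b ^ (k - 1) (a - b) ^ 2`.
    have hrec : a ^ (n + 3) - b ^ (n + 3) - (n + 3) * b ^ (n + 2) * (a - b)
        = a * (a ^ (n + 2) - b ^ (n + 2) - (n + 2) * b ^ (n + 1) * (a - b))
          + (n + 2) * b ^ (n + 1) * (a - b) ^ 2 := by ring
    have hrem : a * (a ^ (n + 2) - b ^ (n + 2) - (n + 2) * b ^ (n + 1) * (a - b))
        ≤ M * ((n + 2) * (n + 1) / 2 * M ^ n * (a - b) ^ 2) := by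
      have := ha.trans haM
      calc _ ≤ a * ((n + 2) * (n + 1) / 2 * M ^ n * (a - b) ^ 2) := by gcongr; linarith
        _ ≤ _ := by gcongr
    have hlin : (n + 2) * b ^ (n + 1) * (a - b) ^ 2 ≤ (n + 2) * M ^ (n + 1) * (a - b) ^ 2 := by
      gcongr
    push_cast
    linear_combination hrec + hrem + hlin

lemma sum_sub_expect_eq_zero {ι : Type*} (s : Finset ι) (f : ι → ℝ) :
    ∑ i ∈ s, (f i - 𝔼 j ∈ s, f j) = 0 := by
  rw [sum_sub_distrib, sum_const, ← card_smul_expect]; simp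

lemma sum_pow_le_card_mul_expect_pow_add {ι : Type*} {s : Finset ι} (hs : s.Nonempty)
    {f : ι → ℝ} {M : ℝ} (hf : ∀ i ∈ s, 0 ≤ f i) (hfM : ∀ i ∈ s, f i ≤ M) (n : ℕ) :
    ∑ i ∈ s, f i ^ (n + 2) ≤ #s * (𝔼 i ∈ s, f i) ^ (n + 2)
      + (n + 2) * (n + 1) / 2 * M ^ n * ∑ i ∈ s, (f i - 𝔼 j ∈ s, f j) ^ 2 := by
  set μ := 𝔼 i ∈ s, f i
  calc ∑ i ∈ s, f i ^ (n + 2)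
      ≤ ∑ i ∈ s, (μ ^ (n + 2) + (n + 2) * μ ^ (n + 1) * (f i - μ)
          + (n + 2) * (n + 1) / 2 * M ^ n * (f i - μ) ^ 2) :=
        sum_le_sum fun i hi => pow_le_pow_add_mul_sub_add_sq n (hf i hi) (expect_nonneg hf)
          (hfM i hi) (expect_le hs hfM)
    _ = _ := by
        rw [sum_add_distrib, sum_add_distrib, ← mul_sum, ← mul_sum, sum_sub_expect_eq_zero,
          sum_const, nsmul_eq_mul, mul_zero, add_zero]

theorem stmt_5 (X : Type*) [Fintype X] [Nonempty X] (φ : X → ℝ)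
    (hφ : ∀ x, 0 ≤ φ x) (n : ℕ) (hn : 2 ≤ n) :
    ∑ x, φ x ^ n ≤
      (∑ x, φ x) ^ n / (Fintype.card X : ℝ) ^ (n - 1)
      + ((n : ℝ) * ((n : ℝ) - 1) / 2) * (⨆ x, φ x) ^ (n - 2) *
        ∑ x, (φ x - (∑ y, φ y) / (Fintype.card X : ℝ)) ^ 2 := by
  obtain ⟨m, rfl⟩ : ∃ m, n = m + 2 := ⟨n - 2, by omega⟩
  have hbound := sum_pow_le_card_mul_expect_pow_add univ_nonempty (fun x _ => hφ x)
    (fun x _ => le_ciSup (Finite.bddAbove_range φ) x) m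
  simp only [expect_eq_sum_div_card, card_univ] at hbound
  rw [show m + 2 - 1 = m + 1 by omega, show m + 2 - 2 = m by omega]
  convert hbound using 2
  · have hN : (Fintype.card X : ℝ) ≠ 0 := by positivity
    rw [div_pow]; field_simp; ring
  · push_cast; ring
end

section
/- Let q = p^n, p ≡ 3 (mod 4), n odd, and let t ∈ F_q, t ≠ 0. Suppose m, ℓ, m', ℓ' ∈ S_t = {x ∈ F_q^2 : x_1^2 + x_2^2 = t} satisfy m + ℓ = m' + ℓ'. Then either (m = m' and ℓ = ℓ'), or (m = ℓ' and ℓ = m'), or m + ℓ = 0. -/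
lemma sq_add_sq_eq_zero {F : Type*} [Field F] (hI : ¬ IsSquare (-1 : F))
    (a b : F) (h : a ^ 2 + b ^ 2 = 0) : a = 0 ∧ b = 0 := by
  by_cases hb : b = 0
  · subst hb
    refine ⟨?_, rfl⟩
    have h2 : a ^ 2 = 0 := by linear_combination h
    exact pow_eq_zero_iff (by norm_num) |>.mp h2
  · exfalso
    exact hI ⟨a / b, by field_simp; linear_combination -h⟩

theorem stmt_12 (p n : ℕ) (hp : p.Prime) (hp4 : p % 4 = 3) (hn : Odd n)
    (F : Type*) [Field F] [Fintype F] (hcard : Fintype.card F = p ^ n)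
    (t : F) (ht : t ≠ 0) (m ℓ m' ℓ' : Fin 2 → F)
    (hm : m 0 ^ 2 + m 1 ^ 2 = t) (hℓ : ℓ 0 ^ 2 + ℓ 1 ^ 2 = t)
    (hm' : m' 0 ^ 2 + m' 1 ^ 2 = t) (hℓ' : ℓ' 0 ^ 2 + ℓ' 1 ^ 2 = t)
    (hsum : m + ℓ = m' + ℓ') :
    (m = m' ∧ ℓ = ℓ') ∨ (m = ℓ' ∧ ℓ = m') ∨ m + ℓ = 0 := by
  have hq4 : (p ^ n) % 4 = 3 := by
    obtain ⟨k, hk⟩ := hn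
    subst hk
    rw [Nat.pow_mod, hp4, pow_succ, pow_mul]
    norm_num [Nat.mul_mod, Nat.pow_mod]
  have hI : ¬ IsSquare (-1 : F) := by
    rw [FiniteField.isSquare_neg_one_iff, hcard]
    simp [hq4]
  have key := sq_add_sq_eq_zero hI
  have h0 : m 0 + ℓ 0 = m' 0 + ℓ' 0 := congrFun hsum 0
  have h1 : m 1 + ℓ 1 = m' 1 + ℓ' 1 := congrFun hsum 1
  by_cases hs : m 0 + ℓ 0 = 0 ∧ m 1 + ℓ 1 = 0
  · right; right
    funext i
    fin_cases i
    · exact hs.1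
    · exact hs.2
  · have hNs : (m 0 + ℓ 0) ^ 2 + (m 1 + ℓ 1) ^ 2 ≠ 0 := fun h => hs (key _ _ h)
    have e1 : (m 0 + ℓ 0) * (m 0 * ℓ 0 - m 1 * ℓ 1) + (m 1 + ℓ 1) * (m 0 * ℓ 1 + m 1 * ℓ 0)
        = t * (m 0 + ℓ 0) := by linear_combination ℓ 0 * hm + m 0 * hℓ
    have e1' : (m' 0 + ℓ' 0) * (m' 0 * ℓ' 0 - m' 1 * ℓ' 1) + (m' 1 + ℓ' 1) * (m' 0 * ℓ' 1 + m' 1 * ℓ' 0)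
        = t * (m' 0 + ℓ' 0) := by linear_combination ℓ' 0 * hm' + m' 0 * hℓ'
    have e2 : (m 0 + ℓ 0) * (m 0 * ℓ 1 + m 1 * ℓ 0) - (m 1 + ℓ 1) * (m 0 * ℓ 0 - m 1 * ℓ 1)
        = t * (m 1 + ℓ 1) := by linear_combination ℓ 1 * hm + m 1 * hℓ
    have e2' : (m' 0 + ℓ' 0) * (m' 0 * ℓ' 1 + m' 1 * ℓ' 0) - (m' 1 + ℓ' 1) * (m' 0 * ℓ' 0 - m' 1 * ℓ' 1)
        = t * (m' 1 + ℓ' 1) := by linear_combination ℓ' 1 * hm' + m' 1 * hℓ'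
    rw [← h0, ← h1] at e1' e2'
    have hP0 : m 0 * ℓ 0 - m 1 * ℓ 1 = m' 0 * ℓ' 0 - m' 1 * ℓ' 1 := by
      have hz : ((m 0 + ℓ 0) ^ 2 + (m 1 + ℓ 1) ^ 2) *
          ((m 0 * ℓ 0 - m 1 * ℓ 1) - (m' 0 * ℓ' 0 - m' 1 * ℓ' 1)) = 0 := by
        linear_combination (m 0 + ℓ 0) * e1 - (m 0 + ℓ 0) * e1' - (m 1 + ℓ 1) * e2 +
          (m 1 + ℓ 1) * e2'
      rcases mul_eq_zero.mp hz with h | h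
      · exact absurd h hNs
      · linear_combination h
    have hP1 : m 0 * ℓ 1 + m 1 * ℓ 0 = m' 0 * ℓ' 1 + m' 1 * ℓ' 0 := by
      have hz : ((m 0 + ℓ 0) ^ 2 + (m 1 + ℓ 1) ^ 2) *
          ((m 0 * ℓ 1 + m 1 * ℓ 0) - (m' 0 * ℓ' 1 + m' 1 * ℓ' 0)) = 0 := by
        linear_combination (m 1 + ℓ 1) * e1 - (m 1 + ℓ 1) * e1' + (m 0 + ℓ 0) * e2 -
          (m 0 + ℓ 0) * e2'
      rcases mul_eq_zero.mp hz with h | h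
      · exact absurd h hNs
      · linear_combination h
    have hprod0 : (m 0 - m' 0) * (m 0 - ℓ' 0) - (m 1 - m' 1) * (m 1 - ℓ' 1) = 0 := by
      linear_combination m 0 * h0 - m 1 * h1 - hP0
    have hprod1 : (m 0 - m' 0) * (m 1 - ℓ' 1) + (m 1 - m' 1) * (m 0 - ℓ' 0) = 0 := by
      linear_combination m 0 * h1 + m 1 * h0 - hP1
    have hNN : ((m 0 - m' 0) ^ 2 + (m 1 - m' 1) ^ 2) *
        ((m 0 - ℓ' 0) ^ 2 + (m 1 - ℓ' 1) ^ 2) = 0 := by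
      linear_combination ((m 0 - m' 0) * (m 0 - ℓ' 0) - (m 1 - m' 1) * (m 1 - ℓ' 1)) * hprod0 +
        ((m 0 - m' 0) * (m 1 - ℓ' 1) + (m 1 - m' 1) * (m 0 - ℓ' 0)) * hprod1
    rcases mul_eq_zero.mp hNN with h | h
    · left
      obtain ⟨hd0, hd1⟩ := key _ _ h
      have hm0 : m 0 = m' 0 := by linear_combination hd0
      have hm1 : m 1 = m' 1 := by linear_combination hd1
      constructor
      · funext i; fin_cases i <;> assumption
      · funext i
        fin_cases i
        · show ℓ 0 = ℓ' 0; linear_combination h0 - hm0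
        · show ℓ 1 = ℓ' 1; linear_combination h1 - hm1
    · right; left
      obtain ⟨he0, he1⟩ := key _ _ h
      have hm0 : m 0 = ℓ' 0 := by linear_combination he0
      have hm1 : m 1 = ℓ' 1 := by linear_combination he1
      constructor
      · funext i; fin_cases i <;> assumption
      · funext i
        fin_cases i
        · show ℓ 0 = m' 0; linear_combination h0 - hm0
        · show ℓ 1 = m' 1; linear_combination h1 - hm1
end

section
/- Let q = p^n, p ≡ 3 (mod 4), n odd, t ∈ F_q nonzero, and g : F_q^2 → ℂ a function supported on S_t. Then the additive energy Σ_{m+ℓ = m'+ℓ', all in S_t} g(m)g(ℓ)\overline{g(m')}\overline{g(ℓ')} is bounded by C (Σ_{x} |g(x)|^2)^2 for an absolute constant C. -/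
lemma circle_key {F : Type} [Field F]
    (hsq : ∀ x y : F, x ^ 2 + y ^ 2 = 0 → x = 0 ∧ y = 0)
    (a b c d a' b' c' d' : F)
    (h2 : c ^ 2 + d ^ 2 = a ^ 2 + b ^ 2)
    (h3 : a' ^ 2 + b' ^ 2 = a ^ 2 + b ^ 2)
    (h4 : c' ^ 2 + d' ^ 2 = a ^ 2 + b ^ 2)
    (hs1 : a + c = a' + c') (hs2 : b + d = b' + d') :
    (a = a' ∧ b = b' ∧ c = c' ∧ d = d') ∨ (a = c' ∧ b = d' ∧ c = a' ∧ d = b') ∨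
      (a + c = 0 ∧ b + d = 0) := by
  have hchar : (2 : F) ≠ 0 := by
    intro h
    have h1 : (-1 : F) = 1 := by linear_combination -h
    rcases (⟨1, by rw [h1]; ring⟩ : IsSquare (-1 : F)) with ⟨r, hr⟩
    exact one_ne_zero (hsq r 1 (by linear_combination -hr)).2
  by_cases hz : a + c = 0 ∧ b + d = 0
  · exact Or.inr (Or.inr hz)
  · have hss : (a + c) ^ 2 + (b + d) ^ 2 ≠ 0 := by
      intro h
      exact hz ⟨(hsq _ _ h).1, (hsq _ _ h).2⟩
    have hc' : c' = a + c - a' := by linear_combination -hs1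
    have hd' : d' = b + d - b' := by linear_combination -hs2
    subst hc' hd'
    by_cases huv : a = a' ∧ b = b'
    · obtain ⟨rfl, rfl⟩ := huv
      exact Or.inl ⟨rfl, rfl, by ring, by ring⟩
    · have hE1 : (a + c) * (a - a') + (b + d) * (b - b') = 0 := by
        have h : 2 * ((a + c) * (a - a') + (b + d) * (b - b')) = 0 := by
          linear_combination -h2 - h3 + h4
        exact (mul_eq_zero.mp h).resolve_left hchar
      have hE2 : (a - a') * (a + a') + (b - b') * (b + b') = 0 := by
        linear_combination -h3
      have hE4 : (a + c) * (a' - c) + (b + d) * (b' - d) = 0 := by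
        have h : 2 * ((a + c) * (a' - c) + (b + d) * (b' - d)) = 0 := by
          linear_combination -h2 + h3 - h4
        exact (mul_eq_zero.mp h).resolve_left hchar
      have hE3 : (a - a') * (a' - c) + (b - b') * (b' - d) = 0 := by
        linear_combination hE2 - hE1
      have hD : (a' - c) * (b + d) - (b' - d) * (a + c) = 0 := by
        rcases not_and_or.mp huv with hu | hv
        · have hu' : a - a' ≠ 0 := sub_ne_zero.mpr hu
          have h : (a - a') * ((a' - c) * (b + d) - (b' - d) * (a + c)) = 0 := by
            linear_combination (b + d) * hE3 - (b' - d) * hE1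
          exact (mul_eq_zero.mp h).resolve_left hu'
        · have hv' : b - b' ≠ 0 := sub_ne_zero.mpr hv
          have h : (b - b') * ((a' - c) * (b + d) - (b' - d) * (a + c)) = 0 := by
            linear_combination (a' - c) * hE1 - (a + c) * hE3
          exact (mul_eq_zero.mp h).resolve_left hv'
      have hp : a' - c = 0 := by
        have h : ((a + c) ^ 2 + (b + d) ^ 2) * (a' - c) = 0 := by
          linear_combination (a + c) * hE4 + (b + d) * hD
        exact (mul_eq_zero.mp h).resolve_left hss
      have hq : b' - d = 0 := by
        have h : ((a + c) ^ 2 + (b + d) ^ 2) * (b' - d) = 0 := by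
          linear_combination (b + d) * hE4 - (a + c) * hD
        exact (mul_eq_zero.mp h).resolve_left hss
      have hca : c = a' := by linear_combination -hp
      have hdb : d = b' := by linear_combination -hq
      subst hca hdb
      exact Or.inr (Or.inl ⟨by ring, by ring, rfl, rfl⟩)

theorem stmt_13 :
    ∃ C : ℝ, 0 < C ∧
      ∀ (p n : ℕ), p.Prime → p % 4 = 3 → Odd n →
      ∀ (F : Type) [Field F] [Fintype F] [DecidableEq F], Fintype.card F = p ^ n →
      ∀ (t : F), t ≠ 0 →
      ∀ (g : (Fin 2 → F) → ℂ),
        (∀ x : Fin 2 → F, x 0 ^ 2 + x 1 ^ 2 ≠ t → g x = 0) →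
        ‖∑ m : Fin 2 → F, ∑ ℓ : Fin 2 → F, ∑ m' : Fin 2 → F, ∑ ℓ' : Fin 2 → F,
            (if m + ℓ = m' + ℓ' then
              g m * g ℓ * (starRingEnd ℂ) (g m') * (starRingEnd ℂ) (g ℓ')
            else 0)‖
          ≤ C * (∑ x : Fin 2 → F, ‖g x‖ ^ 2) ^ 2 := by
  refine ⟨3, by norm_num, ?_⟩
  intro p n hp hp4 hn F _ _ _ hcard t ht g hg
  have h3pow : ∀ k : ℕ, 3 ^ (2 * k + 1) % 4 = 3 := by
    intro k
    induction k with
    | zero => rfl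
    | succ k ih =>
      have h9 : 3 ^ (2 * (k + 1) + 1) = 3 ^ (2 * k + 1) * 9 := by ring
      rw [h9, Nat.mul_mod, ih]
  have hcard4 : Fintype.card F % 4 = 3 := by
    obtain ⟨k, hk⟩ := hn
    rw [hcard, Nat.pow_mod, hp4, hk]
    exact h3pow k
  have hnsq : ¬ IsSquare (-1 : F) := by
    rw [FiniteField.isSquare_neg_one_iff]
    simp [hcard4]
  have hsq : ∀ x y : F, x ^ 2 + y ^ 2 = 0 → x = 0 ∧ y = 0 := by
    intro x y h
    by_cases hy : y = 0
    · subst hy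
      refine ⟨pow_eq_zero_iff (n := 2) (by norm_num) |>.mp (by linear_combination h), rfl⟩
    · exact absurd (⟨x / y, by field_simp; linear_combination -h⟩ : IsSquare (-1 : F)) hnsq
  -- classification of quadruples
  have hclass : ∀ m ℓ m' ℓ' : Fin 2 → F, g m ≠ 0 → g ℓ ≠ 0 → g m' ≠ 0 → g ℓ' ≠ 0 →
      m + ℓ = m' + ℓ' →
      (m' = m ∧ ℓ' = ℓ) ∨ (m' = ℓ ∧ ℓ' = m) ∨ (ℓ = -m ∧ ℓ' = -m') := by
    intro m ℓ m' ℓ' hm hℓ hm' hℓ' hsum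
    have cm : m 0 ^ 2 + m 1 ^ 2 = t := by
      by_contra h; exact hm (hg m h)
    have cℓ : ℓ 0 ^ 2 + ℓ 1 ^ 2 = t := by
      by_contra h; exact hℓ (hg ℓ h)
    have cm' : m' 0 ^ 2 + m' 1 ^ 2 = t := by
      by_contra h; exact hm' (hg m' h)
    have cℓ' : ℓ' 0 ^ 2 + ℓ' 1 ^ 2 = t := by
      by_contra h; exact hℓ' (hg ℓ' h)
    have hs1 : m 0 + ℓ 0 = m' 0 + ℓ' 0 := by
      have := congr_fun hsum 0; simpa using this
    have hs2 : m 1 + ℓ 1 = m' 1 + ℓ' 1 := by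
      have := congr_fun hsum 1; simpa using this
    rcases circle_key hsq (m 0) (m 1) (ℓ 0) (ℓ 1) (m' 0) (m' 1) (ℓ' 0) (ℓ' 1)
      (by rw [cℓ, cm]) (by rw [cm', cm]) (by rw [cℓ', cm]) hs1 hs2 with
      ⟨e1, e2, e3, e4⟩ | ⟨e1, e2, e3, e4⟩ | ⟨e1, e2⟩
    · refine Or.inl ⟨?_, ?_⟩ <;> funext i <;> fin_cases i <;> simp [e1.symm, e2.symm, e3.symm, e4.symm]
    · refine Or.inr (Or.inl ⟨?_, ?_⟩) <;> funext i <;> fin_cases i <;>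
        simp [e1.symm, e2.symm, e3.symm, e4.symm]
    · have e3 : m' 0 + ℓ' 0 = 0 := by rw [← hs1]; exact e1
      have e4 : m' 1 + ℓ' 1 = 0 := by rw [← hs2]; exact e2
      refine Or.inr (Or.inr ⟨?_, ?_⟩) <;> funext i <;> fin_cases i <;> simp <;> first
        | linear_combination e1
        | linear_combination e2
        | linear_combination e3
        | linear_combination e4
  -- abbreviations
  have hS0 : (0:ℝ) ≤ ∑ x : Fin 2 → F, ‖g x‖ ^ 2 :=
    Finset.sum_nonneg fun x _ => by positivity
  -- pointwise bound
  have hpt : ∀ m ℓ m' ℓ' : Fin 2 → F,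
      ‖(if m + ℓ = m' + ℓ' then
          g m * g ℓ * (starRingEnd ℂ) (g m') * (starRingEnd ℂ) (g ℓ') else 0)‖
        ≤ (if m' = m ∧ ℓ' = ℓ then ‖g m‖ * ‖g ℓ‖ * ‖g m'‖ * ‖g ℓ'‖ else 0)
          + (if m' = ℓ ∧ ℓ' = m then ‖g m‖ * ‖g ℓ‖ * ‖g m'‖ * ‖g ℓ'‖ else 0)
          + (if ℓ = -m ∧ ℓ' = -m' then ‖g m‖ * ‖g ℓ‖ * ‖g m'‖ * ‖g ℓ'‖ else 0) := by
    intro m ℓ m' ℓ'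
    have hA : (0:ℝ) ≤ (if m' = m ∧ ℓ' = ℓ then ‖g m‖ * ‖g ℓ‖ * ‖g m'‖ * ‖g ℓ'‖ else 0) := by
      split <;> positivity
    have hB : (0:ℝ) ≤ (if m' = ℓ ∧ ℓ' = m then ‖g m‖ * ‖g ℓ‖ * ‖g m'‖ * ‖g ℓ'‖ else 0) := by
      split <;> positivity
    have hC : (0:ℝ) ≤ (if ℓ = -m ∧ ℓ' = -m' then ‖g m‖ * ‖g ℓ‖ * ‖g m'‖ * ‖g ℓ'‖ else 0) := by
      split <;> positivity
    by_cases hcond : m + ℓ = m' + ℓ'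
    · rw [if_pos hcond]
      have hnorm : ‖g m * g ℓ * (starRingEnd ℂ) (g m') * (starRingEnd ℂ) (g ℓ')‖
          = ‖g m‖ * ‖g ℓ‖ * ‖g m'‖ * ‖g ℓ'‖ := by
        rw [norm_mul, norm_mul, norm_mul, RCLike.norm_conj, RCLike.norm_conj]
      rw [hnorm]
      by_cases hprod : ‖g m‖ * ‖g ℓ‖ * ‖g m'‖ * ‖g ℓ'‖ = 0
      · linarith [hprod]
      · have hm : g m ≠ 0 := fun h => hprod (by simp [h])
        have hℓ : g ℓ ≠ 0 := fun h => hprod (by simp [h])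
        have hm' : g m' ≠ 0 := fun h => hprod (by simp [h])
        have hℓ' : g ℓ' ≠ 0 := fun h => hprod (by simp [h])
        rcases hclass m ℓ m' ℓ' hm hℓ hm' hℓ' hcond with h | h | h
        · rw [if_pos h] at hA ⊢; linarith
        · rw [if_pos h] at hB ⊢; linarith
        · rw [if_pos h] at hC ⊢; linarith
    · rw [if_neg hcond, norm_zero]; linarith
  have step1 : ‖∑ m : Fin 2 → F, ∑ ℓ : Fin 2 → F, ∑ m' : Fin 2 → F, ∑ ℓ' : Fin 2 → F,
      (if m + ℓ = m' + ℓ' then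
        g m * g ℓ * (starRingEnd ℂ) (g m') * (starRingEnd ℂ) (g ℓ') else 0)‖
      ≤ ∑ m : Fin 2 → F, ∑ ℓ : Fin 2 → F, ∑ m' : Fin 2 → F, ∑ ℓ' : Fin 2 → F,
        ‖(if m + ℓ = m' + ℓ' then
          g m * g ℓ * (starRingEnd ℂ) (g m') * (starRingEnd ℂ) (g ℓ') else 0)‖ := by
    refine (norm_sum_le _ _).trans (Finset.sum_le_sum fun m _ => ?_)
    refine (norm_sum_le _ _).trans (Finset.sum_le_sum fun ℓ _ => ?_)
    refine (norm_sum_le _ _).trans (Finset.sum_le_sum fun m' _ => ?_)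
    exact norm_sum_le _ _
  have step2 : (∑ m : Fin 2 → F, ∑ ℓ : Fin 2 → F, ∑ m' : Fin 2 → F, ∑ ℓ' : Fin 2 → F,
      ‖(if m + ℓ = m' + ℓ' then
        g m * g ℓ * (starRingEnd ℂ) (g m') * (starRingEnd ℂ) (g ℓ') else 0)‖)
      ≤ ∑ m : Fin 2 → F, ∑ ℓ : Fin 2 → F, ∑ m' : Fin 2 → F, ∑ ℓ' : Fin 2 → F,
        ((if m' = m ∧ ℓ' = ℓ then ‖g m‖ * ‖g ℓ‖ * ‖g m'‖ * ‖g ℓ'‖ else 0)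
          + (if m' = ℓ ∧ ℓ' = m then ‖g m‖ * ‖g ℓ‖ * ‖g m'‖ * ‖g ℓ'‖ else 0)
          + (if ℓ = -m ∧ ℓ' = -m' then ‖g m‖ * ‖g ℓ‖ * ‖g m'‖ * ‖g ℓ'‖ else 0)) := by
    refine Finset.sum_le_sum fun m _ => Finset.sum_le_sum fun ℓ _ =>
      Finset.sum_le_sum fun m' _ => Finset.sum_le_sum fun ℓ' _ => hpt m ℓ m' ℓ'
  have hsplit : (∑ m : Fin 2 → F, ∑ ℓ : Fin 2 → F, ∑ m' : Fin 2 → F, ∑ ℓ' : Fin 2 → F,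
        ((if m' = m ∧ ℓ' = ℓ then ‖g m‖ * ‖g ℓ‖ * ‖g m'‖ * ‖g ℓ'‖ else 0)
          + (if m' = ℓ ∧ ℓ' = m then ‖g m‖ * ‖g ℓ‖ * ‖g m'‖ * ‖g ℓ'‖ else 0)
          + (if ℓ = -m ∧ ℓ' = -m' then ‖g m‖ * ‖g ℓ‖ * ‖g m'‖ * ‖g ℓ'‖ else 0)))
      = (∑ m : Fin 2 → F, ∑ ℓ : Fin 2 → F, ∑ m' : Fin 2 → F, ∑ ℓ' : Fin 2 → F,
          (if m' = m ∧ ℓ' = ℓ then ‖g m‖ * ‖g ℓ‖ * ‖g m'‖ * ‖g ℓ'‖ else 0))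
        + (∑ m : Fin 2 → F, ∑ ℓ : Fin 2 → F, ∑ m' : Fin 2 → F, ∑ ℓ' : Fin 2 → F,
          (if m' = ℓ ∧ ℓ' = m then ‖g m‖ * ‖g ℓ‖ * ‖g m'‖ * ‖g ℓ'‖ else 0))
        + (∑ m : Fin 2 → F, ∑ ℓ : Fin 2 → F, ∑ m' : Fin 2 → F, ∑ ℓ' : Fin 2 → F,
          (if ℓ = -m ∧ ℓ' = -m' then ‖g m‖ * ‖g ℓ‖ * ‖g m'‖ * ‖g ℓ'‖ else 0)) := by
    simp [Finset.sum_add_distrib]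
  have hSA : (∑ m : Fin 2 → F, ∑ ℓ : Fin 2 → F, ∑ m' : Fin 2 → F, ∑ ℓ' : Fin 2 → F,
        (if m' = m ∧ ℓ' = ℓ then ‖g m‖ * ‖g ℓ‖ * ‖g m'‖ * ‖g ℓ'‖ else 0))
      = (∑ x : Fin 2 → F, ‖g x‖ ^ 2) * (∑ x : Fin 2 → F, ‖g x‖ ^ 2) := by
    rw [Finset.sum_mul_sum]
    simp [ite_and, Finset.sum_ite_eq']
    exact Finset.sum_congr rfl fun m _ => Finset.sum_congr rfl fun ℓ _ => by ring
  have hSB : (∑ m : Fin 2 → F, ∑ ℓ : Fin 2 → F, ∑ m' : Fin 2 → F, ∑ ℓ' : Fin 2 → F,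
        (if m' = ℓ ∧ ℓ' = m then ‖g m‖ * ‖g ℓ‖ * ‖g m'‖ * ‖g ℓ'‖ else 0))
      = (∑ x : Fin 2 → F, ‖g x‖ ^ 2) * (∑ x : Fin 2 → F, ‖g x‖ ^ 2) := by
    rw [Finset.sum_mul_sum]
    simp [ite_and, Finset.sum_ite_eq']
    exact Finset.sum_congr rfl fun m _ => Finset.sum_congr rfl fun ℓ _ => by ring
  have hSC : (∑ m : Fin 2 → F, ∑ ℓ : Fin 2 → F, ∑ m' : Fin 2 → F, ∑ ℓ' : Fin 2 → F,
        (if ℓ = -m ∧ ℓ' = -m' then ‖g m‖ * ‖g ℓ‖ * ‖g m'‖ * ‖g ℓ'‖ else 0))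
      = (∑ m : Fin 2 → F, ‖g m‖ * ‖g (-m)‖) * (∑ m' : Fin 2 → F, ‖g m'‖ * ‖g (-m')‖) := by
    rw [Finset.sum_mul_sum]
    simp [ite_and, Finset.sum_ite_eq', mul_assoc]
  have hT : (∑ m : Fin 2 → F, ‖g m‖ * ‖g (-m)‖) ≤ ∑ x : Fin 2 → F, ‖g x‖ ^ 2 := by
    have hneg : (∑ m : Fin 2 → F, ‖g (-m)‖ ^ 2) = ∑ x : Fin 2 → F, ‖g x‖ ^ 2 :=
      Fintype.sum_equiv (Equiv.neg _) _ _ (fun x => by simp)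
    have h1 : (∑ m : Fin 2 → F, ‖g m‖ * ‖g (-m)‖)
        ≤ ∑ m : Fin 2 → F, (‖g m‖ ^ 2 + ‖g (-m)‖ ^ 2) / 2 :=
      Finset.sum_le_sum fun m _ => by nlinarith [sq_nonneg (‖g m‖ - ‖g (-m)‖)]
    have h2 : (∑ m : Fin 2 → F, (‖g m‖ ^ 2 + ‖g (-m)‖ ^ 2) / 2)
        = ∑ x : Fin 2 → F, ‖g x‖ ^ 2 := by
      rw [← Finset.sum_div, Finset.sum_add_distrib, hneg]
      ring
    linarith [h1, h2.le, h2.ge]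
  have hT0 : (0:ℝ) ≤ ∑ m : Fin 2 → F, ‖g m‖ * ‖g (-m)‖ :=
    Finset.sum_nonneg fun m _ => by positivity
  have hTT : (∑ m : Fin 2 → F, ‖g m‖ * ‖g (-m)‖) * (∑ m' : Fin 2 → F, ‖g m'‖ * ‖g (-m')‖)
      ≤ (∑ x : Fin 2 → F, ‖g x‖ ^ 2) * (∑ x : Fin 2 → F, ‖g x‖ ^ 2) :=
    mul_le_mul hT hT hT0 hS0
  calc ‖∑ m : Fin 2 → F, ∑ ℓ : Fin 2 → F, ∑ m' : Fin 2 → F, ∑ ℓ' : Fin 2 → F,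
      (if m + ℓ = m' + ℓ' then
        g m * g ℓ * (starRingEnd ℂ) (g m') * (starRingEnd ℂ) (g ℓ') else 0)‖
      ≤ _ := step1.trans step2
    _ ≤ 3 * (∑ x : Fin 2 → F, ‖g x‖ ^ 2) ^ 2 := by
        rw [hsplit, hSA, hSB, hSC]
        nlinarith [hTT, hS0]
end

section
/- Let q = p^n, p ≡ 3 (mod 4), n odd, t ≠ 0, and let g : F_q^2 → ℂ be supported on S_t. Define \hat{(gS_t)}(ξ) = q^{-2} Σ_m χ(−m·ξ) g(m). Then Σ_ξ |\hat{(gS_t)}(ξ)|^4 ≤ C q^{-6} (Σ_m |g(m)|^2)^2. -/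
/-!
The unnormalised transform `ĝ ξ = ∑ m, χ (-(m ⬝ᵥ ξ)) * g m` turns additive convolution into
products, so `ĝ ^ 2` is the transform of `g ∗ g` and Plancherel gives
`∑ ξ, ‖ĝ ξ‖ ^ 4 = q ^ 2 * ∑ s, ‖(g ∗ g) s‖ ^ 2`. Since `q ≡ 3 (mod 4)`, `-1` is not a square
in `F`, so `x² + y²` is anisotropic and for `s ≠ 0` the circles `S_t` and `s - S_t` meet in at
most two points. Cauchy–Schwarz then gives `‖(g ∗ g) s‖² ≤ 2 ∑ m, ‖g m‖² ‖g (s - m)‖²` for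
`s ≠ 0` and `‖(g ∗ g) 0‖ ≤ ∑ m, ‖g m‖²`; summing over `s` yields the bound with `C = 3`.
-/

open Finset Matrix
open scoped ComplexConjugate

section Circle
variable {F : Type*} [Field F]

lemma sq_add_sq_eq_zero_iff_of_not_isSquare_neg_one (hF : ¬ IsSquare (-1 : F)) {x y : F} :
    x ^ 2 + y ^ 2 = 0 ↔ x = 0 ∧ y = 0 := by
  refine ⟨fun h => ?_, fun ⟨hx, hy⟩ => by simp [hx, hy]⟩
  by_cases hy : y = 0
  · simp_all
  · exact absurd ⟨x / y, by field_simp; linear_combination -h⟩ hF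

lemma two_ne_zero_of_not_isSquare_neg_one (hF : ¬ IsSquare (-1 : F)) : (2 : F) ≠ 0 :=
  fun h => hF ⟨1, by linear_combination -h⟩

variable [Fintype F] [DecidableEq F]

lemma card_filter_circle_dotProduct_eq_le_two (a : Fin 2 → F) (ha : a 0 ^ 2 + a 1 ^ 2 ≠ 0)
    (b t : F) : #{m : Fin 2 → F | m 0 ^ 2 + m 1 ^ 2 = t ∧ a ⬝ᵥ m = b} ≤ 2 := by
  -- Lagrange's identity `u m ^ 2 + (a ⬝ᵥ m) ^ 2 = |a|² |m|²` pins `u m` to a square root of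
  -- `|a|² t - b²`, and `(a ⬝ᵥ m, u m)` determines `m` because `|a|² ≠ 0`.
  let u : (Fin 2 → F) → F := fun m => a 1 * m 0 - a 0 * m 1
  calc #{m : Fin 2 → F | m 0 ^ 2 + m 1 ^ 2 = t ∧ a ⬝ᵥ m = b}
      ≤ #(Polynomial.nthRootsFinset 2 ((a 0 ^ 2 + a 1 ^ 2) * t - b ^ 2)) := by
        refine card_le_card_of_injOn u (fun m hm => ?_) (fun m hm m' hm' huu => ?_)
        · simp only [coe_filter, mem_univ, true_and, Set.mem_ofPred_eq, dotProduct,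
            Fin.sum_univ_two] at hm
          rw [mem_coe, Polynomial.mem_nthRootsFinset two_pos, ← hm.1, ← hm.2]
          ring
        · simp only [coe_filter, mem_univ, true_and, Set.mem_ofPred_eq, dotProduct,
            Fin.sum_univ_two] at hm hm'
          have hdot : a 0 * (m 0 - m' 0) + a 1 * (m 1 - m' 1) = 0 := by
            linear_combination hm.2 - hm'.2
          have hu : a 1 * (m 0 - m' 0) - a 0 * (m 1 - m' 1) = 0 := by
            linear_combination huu
          ext i
          fin_cases i
          · have : (a 0 ^ 2 + a 1 ^ 2) * (m 0 - m' 0) = 0 := by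
              linear_combination a 0 * hdot + a 1 * hu
            simpa [sub_eq_zero] using (mul_eq_zero.1 this).resolve_left ha
          · have : (a 0 ^ 2 + a 1 ^ 2) * (m 1 - m' 1) = 0 := by
              linear_combination a 1 * hdot - a 0 * hu
            simpa [sub_eq_zero] using (mul_eq_zero.1 this).resolve_left ha
    _ ≤ 2 := by
        rw [Polynomial.nthRootsFinset_def]
        exact (Multiset.toFinset_card_le _).trans (Polynomial.card_nthRoots 2 _)

lemma card_filter_circle_inter_le_two (hF : ¬ IsSquare (-1 : F)) (t : F) {s : Fin 2 → F}
    (hs : s ≠ 0) :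
    #{m : Fin 2 → F | m 0 ^ 2 + m 1 ^ 2 = t ∧ (s - m) 0 ^ 2 + (s - m) 1 ^ 2 = t} ≤ 2 := by
  have hs' : s 0 ^ 2 + s 1 ^ 2 ≠ 0 := fun h => hs <| by
    ext i; fin_cases i <;> simp [(sq_add_sq_eq_zero_iff_of_not_isSquare_neg_one hF).1 h]
  have h2 := two_ne_zero_of_not_isSquare_neg_one hF
  -- two circles of equal radius meet on their radical axis `2 s ⬝ᵥ m = |s|²`
  refine le_trans (card_le_card fun m hm => ?_)
    (card_filter_circle_dotProduct_eq_le_two (2 • s) ?_ (s 0 ^ 2 + s 1 ^ 2) t)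
  · simp only [mem_filter, mem_univ, true_and, Pi.sub_apply, dotProduct, Fin.sum_univ_two,
      Pi.smul_apply] at hm ⊢
    exact ⟨hm.1, by linear_combination hm.1 - hm.2⟩
  · simp only [Pi.smul_apply]
    intro h
    exact hs' ((mul_eq_zero.1 (show 2 ^ 2 * (s 0 ^ 2 + s 1 ^ 2) = 0 by linear_combination h))
      |>.resolve_left (pow_ne_zero 2 h2))

end Circle

section Energy
variable {G : Type*} [AddCommGroup G] [Fintype G]

lemma sum_sum_sq_mul_sub (a : G → ℝ) :
    ∑ s, ∑ m, (a m * a (s - m)) ^ 2 = (∑ m, a m ^ 2) ^ 2 := by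
  rw [sum_comm, sq, sum_mul]
  refine sum_congr rfl fun m _ => ?_
  simp_rw [mul_pow, ← mul_sum]
  congr 1
  exact Equiv.sum_comp (Equiv.subRight m) (fun x => a x ^ 2)

lemma sq_sum_mul_neg_le (a : G → ℝ) : (∑ m, a m * a (-m)) ^ 2 ≤ (∑ m, a m ^ 2) ^ 2 := by
  calc (∑ m, a m * a (-m)) ^ 2 ≤ (∑ m, a m ^ 2) * ∑ m, a (-m) ^ 2 := sum_mul_sq_le_sq_mul_sq _ _ _
    _ = (∑ m, a m ^ 2) ^ 2 := by
        rw [sq, Fintype.sum_equiv (Equiv.neg G) (fun m => a (-m) ^ 2) (fun m => a m ^ 2)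
          fun _ => rfl]

lemma sq_sum_mul_sub_le (a : G → ℝ) (s : G) :
    (∑ m, a m * a (s - m)) ^ 2 ≤
      #{m | a m ≠ 0 ∧ a (s - m) ≠ 0} * ∑ m, (a m * a (s - m)) ^ 2 := by
  have hsupp : ∑ m, a m * a (s - m) = ∑ m ∈ {m | a m ≠ 0 ∧ a (s - m) ≠ 0}, a m * a (s - m) := by
    refine (sum_subset (subset_univ _) fun m _ hm => ?_).symm
    simp only [mem_filter, mem_univ, true_and, not_and_or, not_not] at hm
    rcases hm with h | h <;> simp [h]
  rw [hsupp]
  exact sq_sum_le_card_mul_sum_sq.trans <| mul_le_mul_of_nonneg_left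
    (sum_le_sum_of_subset_of_nonneg (subset_univ _) fun _ _ _ => sq_nonneg _) (by positivity)

lemma sum_sq_sum_mul_sub_le [DecidableEq G] (a : G → ℝ) (k : ℕ)
    (hk : ∀ s ≠ 0, #{m | a m ≠ 0 ∧ a (s - m) ≠ 0} ≤ k) :
    ∑ s, (∑ m, a m * a (s - m)) ^ 2 ≤ (k + 1) * (∑ m, a m ^ 2) ^ 2 := by
  have hoff : ∑ s ∈ univ.erase 0, (∑ m, a m * a (s - m)) ^ 2 ≤ k * (∑ m, a m ^ 2) ^ 2 :=
    calc ∑ s ∈ univ.erase 0, (∑ m, a m * a (s - m)) ^ 2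
        ≤ ∑ s ∈ univ.erase 0, k * ∑ m, (a m * a (s - m)) ^ 2 := by
          refine sum_le_sum fun s hs => (sq_sum_mul_sub_le a s).trans ?_
          gcongr
          exact_mod_cast hk s (ne_of_mem_erase hs)
      _ ≤ ∑ s, (k : ℝ) * ∑ m, (a m * a (s - m)) ^ 2 :=
          sum_le_sum_of_subset_of_nonneg (erase_subset _ _) fun _ _ _ => by positivity
      _ = k * (∑ m, a m ^ 2) ^ 2 := by rw [← mul_sum, sum_sum_sq_mul_sub]
  rw [← add_sum_erase _ _ (mem_univ 0)]
  simp only [zero_sub]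
  linarith [sq_sum_mul_neg_le a]

end Energy

lemma AddChar.map_sum_eq_prod {A M : Type*} [AddCommMonoid A] [CommMonoid M] (χ : AddChar A M)
    {κ : Type*} (s : Finset κ) (f : κ → A) : χ (∑ i ∈ s, f i) = ∏ i ∈ s, χ (f i) := by
  have := congrArg Additive.toMul (map_sum χ.toAddMonoidHom f s)
  rw [toMul_sum] at this
  exact this

section Fourier
variable {ι : Type*} [Fintype ι] [DecidableEq ι]

lemma sum_addChar_dotProduct_sq {R : Type*} [CommRing R] [Fintype R] (χ : AddChar R ℂ)
    (f : (ι → R) → ℂ) (ξ : ι → R) :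
    (∑ m, χ (-(m ⬝ᵥ ξ)) * f m) ^ 2 = ∑ s, χ (-(s ⬝ᵥ ξ)) * ∑ m, f m * f (s - m) := by
  simp_rw [sq, sum_mul_sum, mul_sum]
  conv_rhs => rw [sum_comm]
  refine sum_congr rfl fun m _ => ?_
  conv_rhs => rw [← Equiv.sum_comp (Equiv.addLeft m)]
  refine sum_congr rfl fun l _ => ?_
  simp only [Equiv.coe_addLeft, add_sub_cancel_left, add_dotProduct, neg_add,
    AddChar.map_add_eq_mul]
  ring

variable {F : Type*} [Field F] [Fintype F] [DecidableEq F]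

lemma AddChar.sum_apply_dotProduct {χ : AddChar F ℂ} (hχ : χ ≠ 1) (v : ι → F) :
    ∑ ξ : ι → F, χ (v ⬝ᵥ ξ) = if v = 0 then (Fintype.card F : ℂ) ^ Fintype.card ι else 0 := by
  simp_rw [dotProduct, AddChar.map_sum_eq_prod, mul_comm (v _)]
  rw [← Fintype.prod_sum (fun i x => χ (x * v i))]
  simp_rw [AddChar.sum_mulShift _ (AddChar.IsPrimitive.of_ne_one hχ), Nat.cast_ite, Nat.cast_zero,
    Fintype.prod_ite_zero, prod_const, card_univ, funext_iff, Pi.zero_apply]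

lemma sum_norm_sq_sum_addChar_dotProduct {χ : AddChar F ℂ} (hχ : χ ≠ 1) (f : (ι → F) → ℂ) :
    ∑ ξ : ι → F, ‖∑ m, χ (-(m ⬝ᵥ ξ)) * f m‖ ^ 2 =
      Fintype.card F ^ Fintype.card ι * ∑ m, ‖f m‖ ^ 2 := by
  have hconj (ξ : ι → F) : conj (∑ m, χ (-(m ⬝ᵥ ξ)) * f m) = ∑ m, χ (m ⬝ᵥ ξ) * conj (f m) := by
    simp_rw [map_sum, map_mul, ← AddChar.map_neg_eq_conj, neg_neg]
  apply Complex.ofReal_injective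
  push_cast
  calc ∑ ξ : ι → F, (‖∑ m, χ (-(m ⬝ᵥ ξ)) * f m‖ : ℂ) ^ 2
      = ∑ ξ : ι → F, ∑ m, ∑ m', χ ((m' - m) ⬝ᵥ ξ) * (f m * conj (f m')) := by
        refine sum_congr rfl fun ξ _ => ?_
        rw [← Complex.mul_conj', hconj, sum_mul_sum]
        refine sum_congr rfl fun m _ => sum_congr rfl fun m' _ => ?_
        rw [sub_dotProduct, sub_eq_neg_add, AddChar.map_add_eq_mul]
        ring
    _ = ∑ m, ∑ m', (∑ ξ : ι → F, χ ((m' - m) ⬝ᵥ ξ)) * (f m * conj (f m')) := by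
        rw [sum_comm]
        simp_rw [sum_mul]
        exact sum_congr rfl fun m _ => sum_comm
    _ = (Fintype.card F : ℂ) ^ Fintype.card ι * ∑ m, (‖f m‖ : ℂ) ^ 2 := by
        simp_rw [AddChar.sum_apply_dotProduct hχ, sub_eq_zero, ite_mul, zero_mul, sum_ite_eq',
          mem_univ, if_true, ← Complex.mul_conj', mul_sum]

lemma sum_norm_sum_addChar_dotProduct_pow_four_le {χ : AddChar F ℂ} (hχ : χ ≠ 1)
    (f : (ι → F) → ℂ) (k : ℕ) (hk : ∀ s ≠ 0, #{m | f m ≠ 0 ∧ f (s - m) ≠ 0} ≤ k) :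
    ∑ ξ : ι → F, ‖∑ m, χ (-(m ⬝ᵥ ξ)) * f m‖ ^ 4 ≤
      Fintype.card F ^ Fintype.card ι * ((k + 1) * (∑ m, ‖f m‖ ^ 2) ^ 2) :=
  calc ∑ ξ : ι → F, ‖∑ m, χ (-(m ⬝ᵥ ξ)) * f m‖ ^ 4
      = ∑ ξ : ι → F, ‖(∑ m, χ (-(m ⬝ᵥ ξ)) * f m) ^ 2‖ ^ 2 := by
        simp_rw [norm_pow, ← pow_mul]
    _ = Fintype.card F ^ Fintype.card ι * ∑ s, ‖∑ m, f m * f (s - m)‖ ^ 2 := by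
        simp_rw [sum_addChar_dotProduct_sq, sum_norm_sq_sum_addChar_dotProduct hχ]
    _ ≤ Fintype.card F ^ Fintype.card ι * ∑ s, (∑ m, ‖f m‖ * ‖f (s - m)‖) ^ 2 := by
        gcongr
        exact (norm_sum_le _ _).trans_eq (by simp_rw [norm_mul])
    _ ≤ Fintype.card F ^ Fintype.card ι * ((k + 1) * (∑ m, ‖f m‖ ^ 2) ^ 2) := by
        gcongr
        refine sum_sq_sum_mul_sub_le (fun m => ‖f m‖) k fun s hs => ?_
        simpa only [ne_eq, norm_eq_zero] using hk s hs

end Fourier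

lemma Nat.pow_mod_four_eq_three {p n : ℕ} (hp : p % 4 = 3) (hn : Odd n) : p ^ n % 4 = 3 := by
  obtain ⟨k, rfl⟩ := hn
  rw [Nat.pow_mod, hp, pow_succ, pow_mul, Nat.mul_mod, Nat.pow_mod]
  norm_num

theorem stmt_14 :
    ∃ C : ℝ, 0 < C ∧
      ∀ (p n : ℕ), p.Prime → p % 4 = 3 → Odd n →
      ∀ (F : Type) [Field F] [Fintype F], Fintype.card F = p ^ n →
      ∀ (χ : AddChar F ℂ), χ ≠ 1 →
      ∀ (t : F), t ≠ 0 →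
      ∀ (g : (Fin 2 → F) → ℂ),
        (∀ x : Fin 2 → F, x 0 ^ 2 + x 1 ^ 2 ≠ t → g x = 0) →
        ∑ ξ : Fin 2 → F,
            ‖((Fintype.card F : ℂ) ^ 2)⁻¹ *
              ∑ m : Fin 2 → F, χ (-(m ⬝ᵥ ξ)) * g m‖ ^ 4
          ≤ C * ((Fintype.card F : ℝ) ^ 6)⁻¹ *
              (∑ m : Fin 2 → F, ‖g m‖ ^ 2) ^ 2 := by
  refine ⟨3, by norm_num, fun p n _ hp hn F _ _ hcard χ hχ t _ g hg => ?_⟩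
  classical
  have hF : ¬ IsSquare (-1 : F) := by
    rw [FiniteField.isSquare_neg_one_iff, hcard, Nat.pow_mod_four_eq_three hp hn, not_not]
  have hcircle (s : Fin 2 → F) (hs : s ≠ 0) : #{m | g m ≠ 0 ∧ g (s - m) ≠ 0} ≤ 2 := by
    refine le_trans (card_le_card fun m hm => ?_) (card_filter_circle_inter_le_two hF t hs)
    simp only [mem_filter, mem_univ, true_and] at hm ⊢
    exact ⟨not_imp_comm.1 (hg m) hm.1, not_imp_comm.1 (hg (s - m)) hm.2⟩
  calc ∑ ξ : Fin 2 → F, ‖((Fintype.card F : ℂ) ^ 2)⁻¹ * ∑ m, χ (-(m ⬝ᵥ ξ)) * g m‖ ^ 4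
      = ((Fintype.card F : ℝ) ^ 8)⁻¹ * ∑ ξ : Fin 2 → F, ‖∑ m, χ (-(m ⬝ᵥ ξ)) * g m‖ ^ 4 := by
        simp_rw [norm_mul, mul_pow, mul_sum, norm_inv, norm_pow, Complex.norm_natCast, inv_pow,
          ← pow_mul]
    _ ≤ ((Fintype.card F : ℝ) ^ 8)⁻¹ *
          (Fintype.card F ^ 2 * ((2 + 1) * (∑ m, ‖g m‖ ^ 2) ^ 2)) := by
        gcongr
        exact_mod_cast sum_norm_sum_addChar_dotProduct_pow_four_le hχ g 2 hcircle
    _ = 3 * ((Fintype.card F : ℝ) ^ 6)⁻¹ * (∑ m, ‖g m‖ ^ 2) ^ 2 := by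
        field_simp
        ring
end
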